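/- arXiv:math/9510207 — 4 statements merged into one kernel-verified Lean document; each statement's English description precedes it below -/
import Mathlib

section
/- Let 𝔤 be a k-step nilpotent Lie algebra that is strictly nonsingular, meaning that for every noncentral X ∈ 𝔤, the center 𝔷 of 𝔤 is contained in ad(X)(𝔤). Then the center 𝔷 equals the last nonzero term 𝔤^(k-1) of the lower central series. -/
/-- For a `k`-step nilpotent real Lie algebra which is strictly
nonsingular (the center is contained in `ad X 𝔤` for every noncentral `X`),
the center equals the last nonzero term `𝔤^(k-1)` of the lower central series. -/
theorem stmt1 {L : Type*} [LieRing L] [LieAlgebra ℝ L] [FiniteDimensional ℝ L]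
    (k : ℕ) (hk : 1 ≤ k)
    (hstep : LieModule.lowerCentralSeries ℝ L L k = ⊥)
    (hstep' : LieModule.lowerCentralSeries ℝ L L (k - 1) ≠ ⊥)
    (hsns : ∀ X : L, X ∉ LieAlgebra.center ℝ L →
      ∀ Z ∈ LieAlgebra.center ℝ L, ∃ Y : L, ⁅X, Y⁆ = Z) :
    ∀ x : L, x ∈ LieAlgebra.center ℝ L ↔ x ∈ LieModule.lowerCentralSeries ℝ L L (k - 1) := by
  intro x
  constructor
  · intro hx
    rcases Nat.lt_or_ge k 2 with h2 | h2
    · -- k = 1, so k - 1 = 0 and lcs 0 = ⊤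
      interval_cases k
      simp [LieModule.lowerCentralSeries]
    · -- k ≥ 2 : find a noncentral X in lcs (k-2)
      have hk1 : k - 1 = (k - 2) + 1 := by omega
      have hsucc : LieModule.lowerCentralSeries ℝ L L (k - 1) =
          ⁅(⊤ : LieIdeal ℝ L), LieModule.lowerCentralSeries ℝ L L (k - 2)⁆ := by
        rw [hk1, LieModule.lowerCentralSeries_succ]
      obtain ⟨X, hX2, hXnc⟩ :
          ∃ X, X ∈ LieModule.lowerCentralSeries ℝ L L (k - 2) ∧
            X ∉ LieAlgebra.center ℝ L := by
        by_contra hcon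
        push_neg at hcon
        apply hstep'
        rw [hsucc]
        rw [LieSubmodule.lie_eq_bot_iff]
        intro y _ m hm
        have := hcon m hm
        rw [LieAlgebra.center, LieModule.mem_maxTrivSubmodule] at this
        exact this y
      obtain ⟨Y, hY⟩ := hsns X hXnc x hx
      rw [hsucc]
      have : -⁅Y, X⁆ ∈ ⁅(⊤ : LieIdeal ℝ L), LieModule.lowerCentralSeries ℝ L L (k - 2)⁆ := by
        exact neg_mem (LieSubmodule.lie_mem_lie (LieSubmodule.mem_top Y) hX2)
      rw [← hY, ← lie_skew]
      exact this
  · intro hx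
    rw [LieAlgebra.center, LieModule.mem_maxTrivSubmodule]
    intro y
    have hmem : ⁅y, x⁆ ∈ LieModule.lowerCentralSeries ℝ L L k := by
      have hk1 : k = (k - 1) + 1 := by omega
      rw [hk1, LieModule.lowerCentralSeries_succ]
      exact LieSubmodule.lie_mem_lie (LieSubmodule.mem_top y) hx
    rw [hstep] at hmem
    simpa using hmem
end

section
/- Let G be a group in which for every z ∈ Z(G) and every noncentral x ∈ G there exists a ∈ G with axa⁻¹x⁻¹ = z (strict nonsingularity). Suppose x, y ∈ G are noncentral elements whose images in G/Z(G) are conjugate in G/Z(G). Then x and y are conjugate in G. -/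
/-- In a strictly nonsingular group `G` (every central element is a
commutator `[a,x]` for each fixed noncentral `x`), noncentral elements whose
images in `G/Z(G)` are conjugate are already conjugate in `G`. -/
theorem stmt7 {G : Type*} [Group G]
    (hsns : ∀ z ∈ Subgroup.center G, ∀ x : G, x ∉ Subgroup.center G →
      ∃ a : G, a * x * a⁻¹ * x⁻¹ = z)
    (x y : G) (hx : x ∉ Subgroup.center G) (hy : y ∉ Subgroup.center G)
    (hconj : IsConj (QuotientGroup.mk (s := Subgroup.center G) x)
      (QuotientGroup.mk (s := Subgroup.center G) y)) :
    IsConj x y := by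
  rw [isConj_iff] at hconj
  obtain ⟨cq, hcq⟩ := hconj
  obtain ⟨c, rfl⟩ := QuotientGroup.mk_surjective cq
  -- z := c x c⁻¹ y⁻¹ is central
  have hz : c * x * c⁻¹ * y⁻¹ ∈ Subgroup.center G := by
    rw [← QuotientGroup.ker_mk' (Subgroup.center G)]
    simp only [MonoidHom.mem_ker, QuotientGroup.mk'_apply, QuotientGroup.mk_mul,
      QuotientGroup.mk_inv]
    rw [hcq]
    simp
  obtain ⟨a, ha⟩ := hsns _ (Subgroup.inv_mem _ hz) x hx
  rw [isConj_iff]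
  refine ⟨c * a, ?_⟩
  have ha' : a * x * a⁻¹ = (c * x * c⁻¹ * y⁻¹)⁻¹ * x := by
    rw [← ha]; group
  have hzc := (Subgroup.mem_center_iff.mp hz) c
  calc c * a * x * (c * a)⁻¹ = c * (a * x * a⁻¹) * c⁻¹ := by group
    _ = c * ((c * x * c⁻¹ * y⁻¹)⁻¹ * x) * c⁻¹ := by rw [ha']
    _ = (c * x * c⁻¹ * y⁻¹)⁻¹ * (c * x * c⁻¹) := by
        have : c * (c * x * c⁻¹ * y⁻¹)⁻¹ = (c * x * c⁻¹ * y⁻¹)⁻¹ * c := by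
          exact ((show Commute c _ from hzc).inv_right).eq
        rw [← mul_assoc, ← mul_assoc, this]; group
    _ = y := by group
end

section
/- Let 𝔤 = span{X₁, Y₁, Y₂, Z, W} with nonzero brackets [X₁,Y₁] = Z and [X₁,Z] = [Y₁,Y₂] = W (other basis brackets zero). Then 𝔤 is a three-step nilpotent Lie algebra which is strictly nonsingular: for every noncentral X ∈ 𝔤, the center ℝ·W is contained in ad(X)(𝔤). -/
namespace Stmt11

/-- The 5-dimensional space with coordinates `(x₁, y₁, y₂, z, w)`. -/
abbrev V : Type := Fin 5 → ℝ

/-- The bracket determined by `[X₁,Y₁] = Z`, `[X₁,Z] = [Y₁,Y₂] = W`,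
all other basis brackets zero. -/
def br (u v : V) : V :=
  ![0, 0, 0,
    u 0 * v 1 - u 1 * v 0,
    u 0 * v 3 - u 3 * v 0 + u 1 * v 2 - u 2 * v 1]

/-- The basis vector `W`, spanning the center. -/
def W : V := ![0, 0, 0, 0, 1]

/-- `br` is a three-step nilpotent Lie bracket on `V`
(alternating, Jacobi, `𝔤^(3) = 0 ≠ 𝔤^(2)`) which is strictly nonsingular:
for every noncentral `X` the center `ℝ·W` lies in `ad(X)(𝔤)`. -/
theorem stmt11 :
    (∀ u : V, br u u = 0) ∧
    (∀ u v w : V, br u (br v w) + br v (br w u) + br w (br u v) = 0) ∧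
    (∀ a b c d : V, br a (br b (br c d)) = 0) ∧
    (∃ a b c : V, br a (br b c) ≠ 0) ∧
    (∀ X : V, ¬ (∀ v : V, br X v = 0) → ∀ c : ℝ, ∃ Y : V, br X Y = c • W) := by
  refine ⟨?_, ?_, ?_, ?_, ?_⟩
  · intro u; funext i; fin_cases i <;> simp [br] <;> ring
  · intro u v w; funext i; fin_cases i <;> simp [br] <;> ring
  · intro a b c d; funext i; fin_cases i <;> simp [br] <;> ring
  · refine ⟨![1,0,0,0,0], ![1,0,0,0,0], ![0,1,0,0,0], fun h => ?_⟩
    have := congrFun h 4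
    simp [br] at this
  · intro X hX c
    by_cases h0 : X 0 = 0
    · by_cases h1 : X 1 = 0
      · by_cases h2 : X 2 = 0
        · by_cases h3 : X 3 = 0
          · exfalso; apply hX; intro v; funext i
            fin_cases i <;> simp [br, h0, h1, h2, h3]
          · exact ⟨![-c / X 3, 0, 0, 0, 0], by
              funext i; fin_cases i <;> simp [br, W, h0, h1] <;> field_simp⟩
        · exact ⟨![0, -c / X 2, 0, 0, 0], by
            funext i; fin_cases i <;> simp [br, W, h0, h1] <;> field_simp⟩
      · exact ⟨![0, 0, c / X 1, 0, 0], by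
          funext i; fin_cases i <;> simp [br, W, h0] <;> field_simp⟩
    · exact ⟨![0, 0, 0, c / X 0, 0], by
        funext i; fin_cases i <;> simp [br, W] <;> field_simp⟩

end Stmt11
end

section
/- Let 𝔤 = span{X₁, X₂, Y₁, Y₂, Z₁, Z₂, W} be the three-step nilpotent Lie algebra with nonzero brackets [X₁,Y₁] = [X₂,Y₂] = Z₁, [X₁,Y₂] = Z₂, [X₁,Z₁] = [X₂,Z₂] = [Y₁,Y₂] = W. Then the linear map Φ defined by X₁ ↦ −X₁ + X₂ + ¼Y₁ + ½Y₂, X₂ ↦ X₂ − ½Y₁ + ¼Z₁, Y₁ ↦ −Y₁, Y₂ ↦ 2Y₁ + Y₂ + Z₂, Z₁ ↦ Z₁ + ½W, Z₂ ↦ −Z₁ − Z₂ + ¼W, W ↦ −W is a Lie algebra automorphism of 𝔤, i.e. Φ([U,V]) = [Φ(U), Φ(V)] for all U,V ∈ 𝔤 and Φ is bijective. -/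
namespace Stmt12

/-- The 7-dimensional space with coordinates `(x₁, x₂, y₁, y₂, z₁, z₂, w)`. -/
abbrev V : Type := Fin 7 → ℝ

/-- The bracket determined by `[X₁,Y₁] = [X₂,Y₂] = Z₁`, `[X₁,Y₂] = Z₂`,
`[X₁,Z₁] = [X₂,Z₂] = [Y₁,Y₂] = W`, all other basis brackets zero. -/
def br (u v : V) : V :=
  ![0, 0, 0, 0,
    u 0 * v 2 - u 2 * v 0 + u 1 * v 3 - u 3 * v 1,
    u 0 * v 3 - u 3 * v 0,
    u 0 * v 4 - u 4 * v 0 + u 1 * v 5 - u 5 * v 1 + u 2 * v 3 - u 3 * v 2]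

/-- The linear map `Φ` given on the basis by
`X₁ ↦ −X₁ + X₂ + ¼Y₁ + ½Y₂`, `X₂ ↦ X₂ − ½Y₁ + ¼Z₁`, `Y₁ ↦ −Y₁`,
`Y₂ ↦ 2Y₁ + Y₂ + Z₂`, `Z₁ ↦ Z₁ + ½W`, `Z₂ ↦ −Z₁ − Z₂ + ¼W`, `W ↦ −W`. -/
noncomputable def Phi (u : V) : V :=
  ![-u 0,
    u 0 + u 1,
    (1 / 4) * u 0 - (1 / 2) * u 1 - u 2 + 2 * u 3,
    (1 / 2) * u 0 + u 3,
    (1 / 4) * u 1 + u 4 - u 5,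
    u 3 - u 5,
    (1 / 2) * u 4 + (1 / 4) * u 5 - u 6]

noncomputable def PhiInv (v : V) : V :=
  ![-v 0,
    v 0 + v 1,
    (1 / 4) * v 0 - (1 / 2) * v 1 - v 2 + 2 * v 3,
    (1 / 2) * v 0 + v 3,
    (1 / 4) * v 0 - (1 / 4) * v 1 + v 3 + v 4 - v 5,
    (1 / 2) * v 0 + v 3 - v 5,
    (1 / 4) * v 0 - (1 / 8) * v 1 + (3 / 4) * v 3 + (1 / 2) * v 4 - (3 / 4) * v 5 - v 6]

lemma br4 (u v : V) : br u v 4 = u 0 * v 2 - u 2 * v 0 + u 1 * v 3 - u 3 * v 1 := rfl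
lemma br5 (u v : V) : br u v 5 = u 0 * v 3 - u 3 * v 0 := rfl
lemma br6 (u v : V) : br u v 6 = u 0 * v 4 - u 4 * v 0 + u 1 * v 5 - u 5 * v 1 + u 2 * v 3 - u 3 * v 2 := rfl
lemma br0 (u v : V) : br u v 0 = 0 := rfl
lemma br1 (u v : V) : br u v 1 = 0 := rfl
lemma br2 (u v : V) : br u v 2 = 0 := rfl
lemma br3 (u v : V) : br u v 3 = 0 := rfl
lemma Phi0 (u : V) : Phi u 0 = -u 0 := rfl
lemma Phi1 (u : V) : Phi u 1 = u 0 + u 1 := rfl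
lemma Phi2 (u : V) : Phi u 2 = (1 / 4) * u 0 - (1 / 2) * u 1 - u 2 + 2 * u 3 := rfl
lemma Phi3 (u : V) : Phi u 3 = (1 / 2) * u 0 + u 3 := rfl
lemma Phi4 (u : V) : Phi u 4 = (1 / 4) * u 1 + u 4 - u 5 := rfl
lemma Phi5 (u : V) : Phi u 5 = u 3 - u 5 := rfl
lemma Phi6 (u : V) : Phi u 6 = (1 / 2) * u 4 + (1 / 4) * u 5 - u 6 := rfl
lemma PhiInv0 (u : V) : PhiInv u 0 = -u 0 := rfl
lemma PhiInv1 (u : V) : PhiInv u 1 = u 0 + u 1 := rfl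
lemma PhiInv2 (u : V) : PhiInv u 2 = (1 / 4) * u 0 - (1 / 2) * u 1 - u 2 + 2 * u 3 := rfl
lemma PhiInv3 (u : V) : PhiInv u 3 = (1 / 2) * u 0 + u 3 := rfl
lemma PhiInv4 (u : V) : PhiInv u 4 = (1 / 4) * u 0 - (1 / 4) * u 1 + u 3 + u 4 - u 5 := rfl
lemma PhiInv5 (u : V) : PhiInv u 5 = (1 / 2) * u 0 + u 3 - u 5 := rfl
lemma PhiInv6 (u : V) : PhiInv u 6 = (1 / 4) * u 0 - (1 / 8) * u 1 + (3 / 4) * u 3 + (1 / 2) * u 4 - (3 / 4) * u 5 - u 6 := rfl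

/-- `Φ` is a Lie algebra automorphism of `(V, br)`:
it preserves the bracket and is bijective. -/
theorem stmt12 :
    (∀ u v : V, Phi (br u v) = br (Phi u) (Phi v)) ∧ Function.Bijective Phi := by
  constructor
  · intro u v
    funext i
    fin_cases i
    · show Phi (br u v) 0 = br (Phi u) (Phi v) 0
      simp only [br0, br1, br2, br3, br4, br5, br6, Phi0, Phi1, Phi2, Phi3, Phi4, Phi5, Phi6]
      ring
    · show Phi (br u v) 1 = br (Phi u) (Phi v) 1
      simp only [br0, br1, br2, br3, br4, br5, br6, Phi0, Phi1, Phi2, Phi3, Phi4, Phi5, Phi6]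
      ring
    · show Phi (br u v) 2 = br (Phi u) (Phi v) 2
      simp only [br0, br1, br2, br3, br4, br5, br6, Phi0, Phi1, Phi2, Phi3, Phi4, Phi5, Phi6]
      ring
    · show Phi (br u v) 3 = br (Phi u) (Phi v) 3
      simp only [br0, br1, br2, br3, br4, br5, br6, Phi0, Phi1, Phi2, Phi3, Phi4, Phi5, Phi6]
      ring
    · show Phi (br u v) 4 = br (Phi u) (Phi v) 4
      simp only [br0, br1, br2, br3, br4, br5, br6, Phi0, Phi1, Phi2, Phi3, Phi4, Phi5, Phi6]
      ring
    · show Phi (br u v) 5 = br (Phi u) (Phi v) 5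
      simp only [br0, br1, br2, br3, br4, br5, br6, Phi0, Phi1, Phi2, Phi3, Phi4, Phi5, Phi6]
      ring
    · show Phi (br u v) 6 = br (Phi u) (Phi v) 6
      simp only [br0, br1, br2, br3, br4, br5, br6, Phi0, Phi1, Phi2, Phi3, Phi4, Phi5, Phi6]
      ring
  · apply Function.bijective_iff_has_inverse.mpr
    refine ⟨PhiInv, ?_, ?_⟩
    · intro u
      funext i
      fin_cases i
      · show PhiInv (Phi u) 0 = u 0
        simp only [Phi0, Phi1, Phi2, Phi3, Phi4, Phi5, Phi6, PhiInv0, PhiInv1, PhiInv2, PhiInv3, PhiInv4, PhiInv5, PhiInv6]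
        ring
      · show PhiInv (Phi u) 1 = u 1
        simp only [Phi0, Phi1, Phi2, Phi3, Phi4, Phi5, Phi6, PhiInv0, PhiInv1, PhiInv2, PhiInv3, PhiInv4, PhiInv5, PhiInv6]
        ring
      · show PhiInv (Phi u) 2 = u 2
        simp only [Phi0, Phi1, Phi2, Phi3, Phi4, Phi5, Phi6, PhiInv0, PhiInv1, PhiInv2, PhiInv3, PhiInv4, PhiInv5, PhiInv6]
        ring
      · show PhiInv (Phi u) 3 = u 3
        simp only [Phi0, Phi1, Phi2, Phi3, Phi4, Phi5, Phi6, PhiInv0, PhiInv1, PhiInv2, PhiInv3, PhiInv4, PhiInv5, PhiInv6]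
        ring
      · show PhiInv (Phi u) 4 = u 4
        simp only [Phi0, Phi1, Phi2, Phi3, Phi4, Phi5, Phi6, PhiInv0, PhiInv1, PhiInv2, PhiInv3, PhiInv4, PhiInv5, PhiInv6]
        ring
      · show PhiInv (Phi u) 5 = u 5
        simp only [Phi0, Phi1, Phi2, Phi3, Phi4, Phi5, Phi6, PhiInv0, PhiInv1, PhiInv2, PhiInv3, PhiInv4, PhiInv5, PhiInv6]
        ring
      · show PhiInv (Phi u) 6 = u 6
        simp only [Phi0, Phi1, Phi2, Phi3, Phi4, Phi5, Phi6, PhiInv0, PhiInv1, PhiInv2, PhiInv3, PhiInv4, PhiInv5, PhiInv6]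
        ring
    · intro u
      funext i
      fin_cases i
      · show Phi (PhiInv u) 0 = u 0
        simp only [Phi0, Phi1, Phi2, Phi3, Phi4, Phi5, Phi6, PhiInv0, PhiInv1, PhiInv2, PhiInv3, PhiInv4, PhiInv5, PhiInv6]
        ring
      · show Phi (PhiInv u) 1 = u 1
        simp only [Phi0, Phi1, Phi2, Phi3, Phi4, Phi5, Phi6, PhiInv0, PhiInv1, PhiInv2, PhiInv3, PhiInv4, PhiInv5, PhiInv6]
        ring
      · show Phi (PhiInv u) 2 = u 2
        simp only [Phi0, Phi1, Phi2, Phi3, Phi4, Phi5, Phi6, PhiInv0, PhiInv1, PhiInv2, PhiInv3, PhiInv4, PhiInv5, PhiInv6]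
        ring
      · show Phi (PhiInv u) 3 = u 3
        simp only [Phi0, Phi1, Phi2, Phi3, Phi4, Phi5, Phi6, PhiInv0, PhiInv1, PhiInv2, PhiInv3, PhiInv4, PhiInv5, PhiInv6]
        ring
      · show Phi (PhiInv u) 4 = u 4
        simp only [Phi0, Phi1, Phi2, Phi3, Phi4, Phi5, Phi6, PhiInv0, PhiInv1, PhiInv2, PhiInv3, PhiInv4, PhiInv5, PhiInv6]
        ring
      · show Phi (PhiInv u) 5 = u 5
        simp only [Phi0, Phi1, Phi2, Phi3, Phi4, Phi5, Phi6, PhiInv0, PhiInv1, PhiInv2, PhiInv3, PhiInv4, PhiInv5, PhiInv6]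
        ring
      · show Phi (PhiInv u) 6 = u 6
        simp only [Phi0, Phi1, Phi2, Phi3, Phi4, Phi5, Phi6, PhiInv0, PhiInv1, PhiInv2, PhiInv3, PhiInv4, PhiInv5, PhiInv6]
        ring

end Stmt12
end
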